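/- arXiv:2604.09714 — 2 statements merged into one kernel-verified Lean document; each statement's English description precedes it below -/
import Mathlib

section
/- For every odd prime p, Bell(p) ≡ 2 (mod p). -/
/-- Bell numbers via the standard recurrence. -/
def bell : ℕ → ℕ
  | 0 => 1
  | (n+1) => ∑ k ∈ (Finset.range (n+1)).attach, n.choose k.1 * bell k.1
  decreasing_by exact Finset.mem_range.mp k.2

open Polynomial Finset

lemma bell_succ (n : ℕ) : bell (n+1) = ∑ k ∈ Finset.range (n+1), n.choose k * bell k := by
  rw [bell]
  exact Finset.sum_attach (Finset.range (n+1)) (fun k => n.choose k * bell k)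

/-- Umbral linear functional: φ(Xⁿ) = Bell(n) mod p. -/
noncomputable def phi (p : ℕ) : (ZMod p)[X] →ₗ[ZMod p] ZMod p :=
  Polynomial.lsum (fun n => (bell n : ZMod p) • LinearMap.id)

lemma phi_monomial (p n : ℕ) (a : ZMod p) :
    phi p (monomial n a) = (bell n : ZMod p) * a := by
  simp [phi, Polynomial.lsum_apply, Polynomial.sum_monomial_index]

lemma phi_X_pow (p n : ℕ) : phi p (X ^ n) = (bell n : ZMod p) := by
  rw [← monomial_one_right_eq_X_pow, phi_monomial, mul_one]

lemma phi_X_mul (p : ℕ) (f : (ZMod p)[X]) :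
    phi p (X * f) = phi p (f.comp (X + 1)) := by
  induction f using Polynomial.induction_on' with
  | add f g hf hg => rw [mul_add, map_add, hf, hg, add_comp, map_add]
  | monomial n a =>
    rw [X_mul_monomial, phi_monomial, monomial_comp]
    rw [add_pow]
    simp only [one_pow, mul_one, Finset.mul_sum, map_sum]
    have : ∀ k ∈ Finset.range (n+1),
        phi p (C a * (X ^ k * (n.choose k : (ZMod p)[X]))) =
          (n.choose k : ZMod p) * (bell k : ZMod p) * a := by
      intro k _
      have : C a * (X ^ k * (n.choose k : (ZMod p)[X])) =
          (n.choose k : ZMod p) • (monomial k a) := by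
        rw [smul_eq_C_mul, ← C_mul_X_pow_eq_monomial, C_eq_natCast]
        ring
      rw [this, map_smul, phi_monomial, smul_eq_mul]
      ring
    rw [Finset.sum_congr rfl this, bell_succ]
    push_cast
    rw [Finset.sum_mul]

/-- Falling factorial polynomials over ZMod p. -/
noncomputable def D (p k : ℕ) : (ZMod p)[X] :=
  ∏ i ∈ Finset.range k, (X - C (i : ZMod p))

lemma D_succ (p k : ℕ) : D p (k+1) = X * (D p k).comp (X - 1) := by
  rw [D, D, Polynomial.prod_comp]
  have h : ∀ i : ℕ, (X - C (i : ZMod p)).comp (X - 1) = X - C ((i+1 : ℕ) : ZMod p) := by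
    intro i
    push_cast
    simp [sub_comp]
    ring
  rw [Finset.prod_congr rfl (fun i _ => h i), Finset.prod_range_succ']
  push_cast
  simp [mul_comm]

lemma phi_D (p k : ℕ) : phi p (D p k) = 1 := by
  induction k with
  | zero =>
    have : (D p 0) = monomial 0 1 := by simp [D]
    rw [this, phi_monomial]
    simp [bell]
  | succ k ih =>
    rw [D_succ, phi_X_mul, comp_assoc]
    have : ((X : (ZMod p)[X]) - 1).comp (X + 1) = X := by
      simp [sub_comp]
    rw [this, comp_X, ih]

/-- For every odd prime p, Bell(p) ≡ 2 (mod p). -/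
theorem bell_prime_congruence (p : ℕ) (hp : p.Prime) (hodd : Odd p) :
    bell p ≡ 2 [MOD p] := by
  haveI : Fact p.Prime := ⟨hp⟩
  have hcard : Fintype.card (ZMod p) = p := ZMod.card p
  -- Step 1: D p p = X^p - X
  have hD : D p p = X ^ p - X := by
    have hp2 : 1 < p := hp.one_lt
    have hmonic : (X ^ p - X : (ZMod p)[X]).Monic := by
      refine Polynomial.monic_X_pow_sub ?_
      rw [degree_X]
      exact_mod_cast hp2
    have hroots : (X ^ p - X : (ZMod p)[X]).roots = Finset.univ.val := by
      have := FiniteField.roots_X_pow_card_sub_X (ZMod p)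
      rwa [hcard] at this
    have hdeg : (X ^ p - X : (ZMod p)[X]).natDegree = p :=
      FiniteField.X_pow_card_sub_X_natDegree_eq (ZMod p) hp2
    have hprod := prod_multiset_X_sub_C_of_monic_of_roots_card_eq hmonic
      (by rw [hroots, hdeg]; simpa using hcard)
    rw [hroots] at hprod
    have huniv : D p p = ∏ a : ZMod p, (X - C a) := by
      rw [D]
      refine Finset.prod_bij (fun i _ => (i : ZMod p)) (fun a _ => Finset.mem_univ _)
        ?_ ?_ ?_
      · intro a ha b hb h
        have := congrArg ZMod.val h
        rwa [ZMod.val_cast_of_lt (Finset.mem_range.mp ha),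
          ZMod.val_cast_of_lt (Finset.mem_range.mp hb)] at this
      · intro b _
        exact ⟨b.val, Finset.mem_range.mpr (ZMod.val_lt b), ZMod.natCast_rightInverse b⟩
      · intro a _; rfl
    rw [huniv, ← hprod]
    rfl
  -- Step 2: compute
  have key : (bell p : ZMod p) = 2 := by
    have h1 : (X : (ZMod p)[X]) ^ p = X + D p p := by rw [hD]; ring
    have := phi_X_pow p p
    rw [h1, map_add, phi_D] at this
    have h2 : phi p (X : (ZMod p)[X]) = (bell 1 : ZMod p) := by
      rw [← pow_one (X : (ZMod p)[X]), phi_X_pow]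
    rw [h2] at this
    have hb1 : bell 1 = 1 := by rw [bell_succ]; simp [bell]
    rw [hb1] at this
    rw [← this]
    norm_num
  have := (ZMod.natCast_eq_natCast_iff (bell p) 2 p).mp (by rw [key]; norm_num)
  exact this
end

section
/- For every prime p ≥ 3, p divides (K_p - Bell(p-1)) + 1, where K_p = Σ_{n=0}^{p-1} n!; that is, the Gertsch quotient G_p = ((K_p - Bell(p-1)) + 1)/p is an integer. -/
def stirl : ℕ → ℕ → ℕ
  | 0, 0 => 1
  | 0, _+1 => 0
  | _+1, 0 => 0
  | n+1, k+1 => (k+1) * stirl n (k+1) + stirl n k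

lemma stirl_succ_zero (n : ℕ) : stirl (n+1) 0 = 0 := rfl

lemma stirl_succ_succ (n k : ℕ) :
    stirl (n+1) (k+1) = (k+1) * stirl n (k+1) + stirl n k := rfl

lemma stirl_succ_one (n : ℕ) : stirl (n+1) 1 = 1 := by
  induction n with
  | zero => rfl
  | succ n ih => rw [stirl_succ_succ, stirl_succ_zero, ih]

lemma stirl_eq_zero_of_lt : ∀ {n k : ℕ}, n < k → stirl n k = 0
  | 0, 0, h => absurd h (lt_irrefl 0)
  | 0, _+1, _ => rfl
  | _+1, 0, h => by omega
  | n+1, k+1, h => by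
    rw [stirl_succ_succ, stirl_eq_zero_of_lt (by omega : n < k+1),
      stirl_eq_zero_of_lt (by omega : n < k), mul_zero]

lemma stirl_succ_succ_eq_sum (n : ℕ) : ∀ k,
    stirl (n+1) (k+1) = ∑ j ∈ Finset.range (n+1), n.choose j * stirl j k := by
  induction n with
  | zero => intro k; cases k <;> simp [stirl]
  | succ n ih =>
    intro k
    have hrhs : ∑ j ∈ Finset.range (n+2), (n+1).choose j * stirl j k
        = (∑ i ∈ Finset.range (n+1), n.choose (i+1) * stirl (i+1) k
            + n.choose 0 * stirl 0 k)
          + ∑ i ∈ Finset.range (n+1), n.choose i * stirl (i+1) k := by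
      rw [Finset.sum_range_succ']
      simp_rw [Nat.choose_succ_succ n, add_mul, Finset.sum_add_distrib]
      simp [Nat.choose_zero_right]
      ring
    have hA : ∑ i ∈ Finset.range (n+1), n.choose (i+1) * stirl (i+1) k
        + n.choose 0 * stirl 0 k = stirl (n+1) (k+1) := by
      calc ∑ i ∈ Finset.range (n+1), n.choose (i+1) * stirl (i+1) k
            + n.choose 0 * stirl 0 k
          = ∑ j ∈ Finset.range (n+2), n.choose j * stirl j k :=
            (Finset.sum_range_succ' (fun j => n.choose j * stirl j k) (n+1)).symm
        _ = ∑ j ∈ Finset.range (n+1), n.choose j * stirl j k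
              + n.choose (n+1) * stirl (n+1) k :=
            Finset.sum_range_succ (fun j => n.choose j * stirl j k) (n+1)
        _ = stirl (n+1) (k+1) := by
            rw [Nat.choose_succ_self, zero_mul, add_zero, ← ih k]
    rw [hrhs, hA]
    cases k with
    | zero =>
      simp [stirl_succ_zero, stirl_succ_succ, stirl_succ_one]
    | succ k' =>
      simp_rw [stirl_succ_succ _ k']
      simp_rw [Nat.mul_add, Finset.sum_add_distrib]
      have h1 : ∑ x ∈ Finset.range (n+1), n.choose x * ((k'+1) * stirl x (k'+1))
          = (k'+1) * ∑ x ∈ Finset.range (n+1), n.choose x * stirl x (k'+1) := by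
        rw [Finset.mul_sum]; exact Finset.sum_congr rfl (fun x _ => by ring)
      rw [h1, ← ih k', ← ih (k'+1), stirl_succ_succ (n+1) (k'+1)]
      ring

open scoped Nat

lemma bell_eq (n : ℕ) : bell n = ∑ k ∈ Finset.range (n+1), stirl n k := by
  induction n using Nat.strong_induction_on with
  | _ n ih =>
    cases n with
    | zero => simp [bell, stirl]
    | succ n =>
      rw [bell, Finset.sum_attach (Finset.range (n+1)) (fun j => n.choose j * bell j)]
      have h1 : ∀ j ∈ Finset.range (n+1), n.choose j * bell j
          = n.choose j * ∑ k ∈ Finset.range (n+1), stirl j k := by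
        intro j hj
        have hj' := Finset.mem_range.mp hj
        rw [ih j (by omega)]
        congr 1
        apply Finset.sum_subset (Finset.range_subset_range.mpr (by omega))
        intro k _ hk
        exact stirl_eq_zero_of_lt (by simp only [Finset.mem_range] at hk; omega)
      rw [Finset.sum_congr rfl h1]
      simp_rw [Finset.mul_sum]
      rw [Finset.sum_comm]
      simp_rw [← stirl_succ_succ_eq_sum]
      rw [Finset.sum_range_succ' (fun k => stirl (n+1) k) (n+1), stirl_succ_zero, add_zero]

lemma fact_mul_stirl : ∀ n k : ℕ, ((k)! : ℤ) * stirl n k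
    = ∑ j ∈ Finset.range (k+1), (-1:ℤ)^j * k.choose j * ((k-j : ℕ) : ℤ)^n := by
  intro n
  induction n with
  | zero =>
    intro k
    simp only [pow_zero, mul_one]
    rw [Int.alternating_sum_range_choose]
    cases k with
    | zero => simp [stirl]
    | succ k => simp [stirl_eq_zero_of_lt (Nat.zero_lt_succ k)]
  | succ n ih =>
    intro k
    cases k with
    | zero => simp [stirl_succ_zero]
    | succ k =>
      have hsplit : ∀ j ∈ Finset.range (k+2),
          (-1:ℤ)^j * ((k+1).choose j) * (((k+1)-j : ℕ) : ℤ)^(n+1)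
          = ((k:ℤ)+1) * ((-1:ℤ)^j * ((k+1).choose j) * (((k+1)-j : ℕ) : ℤ)^n)
            - (j : ℤ) * ((-1:ℤ)^j * ((k+1).choose j) * (((k+1)-j:ℕ):ℤ)^n) := by
        intro j hj
        have hj' : j ≤ k+1 := by simp only [Finset.mem_range] at hj; omega
        have hc : (((k+1)-j : ℕ) : ℤ) = ((k:ℤ)+1) - j := by
          push_cast [hj']; ring
        rw [pow_succ, hc]; ring
      have h2 : ∑ j ∈ Finset.range (k+2),
            (j:ℤ) * ((-1:ℤ)^j * ((k+1).choose j) * (((k+1)-j:ℕ):ℤ)^n)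
          = ∑ i ∈ Finset.range (k+1),
            (-((k:ℤ)+1)) * ((-1:ℤ)^i * (k.choose i) * ((k-i:ℕ):ℤ)^n) := by
        rw [Finset.sum_range_succ']
        simp only [Nat.cast_zero, zero_mul, add_zero]
        refine Finset.sum_congr rfl fun i hi => ?_
        have hch : ((i+1) * (k+1).choose (i+1) : ℕ) = (k+1) * k.choose i := by
          rw [mul_comm, Nat.add_one_mul_choose_eq]
        have hcast : ((i:ℤ)+1) * (((k+1).choose (i+1) : ℕ) : ℤ)
            = ((k:ℤ)+1) * ((k.choose i : ℕ) : ℤ) := by exact_mod_cast hch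
        have hsub : (k+1) - (i+1) = k - i := by omega
        rw [hsub]
        push_cast
        linear_combination (-(-1:ℤ)^i * ((k-i:ℕ):ℤ)^n) * hcast
      rw [Finset.sum_congr rfl hsplit, Finset.sum_sub_distrib, ← Finset.mul_sum,
        ← ih (k+1), h2, ← Finset.mul_sum, ← ih k, stirl_succ_succ]
      push_cast [Nat.factorial_succ]
      ring

section ModP
variable (p : ℕ) [Fact p.Prime]

lemma choose_sub_one (hp : p.Prime) : ∀ k, k ≤ p - 1 → (((p-1).choose k : ℕ) : ZMod p) = (-1)^k := by
  intro k
  induction k with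
  | zero => simp
  | succ k ih =>
    intro hk
    have hkp : k ≤ p - 1 := by omega
    have hp1 : p - 1 + 1 = p := by have := hp.two_le; omega
    have hd : p ∣ p.choose (k+1) := hp.dvd_choose_self (by omega) (by omega)
    have hzero : ((p.choose (k+1) : ℕ) : ZMod p) = 0 :=
      (ZMod.natCast_eq_zero_iff _ _).mpr hd
    have hpascal : p.choose (k+1) = (p-1).choose k + (p-1).choose (k+1) := by
      conv_lhs => rw [← hp1]
      exact Nat.choose_succ_succ (p-1) k
    rw [hpascal] at hzero
    push_cast at hzero
    rw [ih hkp] at hzero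
    rw [pow_succ]
    linear_combination hzero

lemma fact_mul_fact (hp : p.Prime) (k : ℕ) (hk : k ≤ p - 1) :
    ((k ! : ℕ) : ZMod p) * (((p-1-k)! : ℕ) : ZMod p) = (-1)^(k+1) := by
  have h := Nat.choose_mul_factorial_mul_factorial hk
  have hcast : (((p-1).choose k : ℕ) : ZMod p) * ((k ! : ℕ) : ZMod p)
      * (((p-1-k)! : ℕ) : ZMod p) = (((p-1)! : ℕ) : ZMod p) := by
    rw [← Nat.cast_mul, ← Nat.cast_mul, h]
  rw [ZMod.wilsons_lemma, choose_sub_one p hp k hk] at hcast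
  have hsq : ((-1 : ZMod p)^k) * ((-1 : ZMod p)^k) = 1 := by
    rw [← pow_add, ← two_mul, pow_mul]; norm_num
  calc ((k ! : ℕ) : ZMod p) * (((p-1-k)! : ℕ) : ZMod p)
      = ((-1)^k * (-1)^k) * (((k ! : ℕ) : ZMod p) * (((p-1-k)! : ℕ) : ZMod p)) := by
        rw [hsq, one_mul]
    _ = (-1)^k * ((-1 : ZMod p)^k * ((k ! : ℕ) : ZMod p) * (((p-1-k)! : ℕ) : ZMod p)) := by ring
    _ = (-1)^k * (-1) := by rw [hcast]
    _ = (-1)^(k+1) := by rw [pow_succ]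

lemma stirl_mod (hp : p.Prime) (h3 : 3 ≤ p) (k : ℕ) (hk1 : 1 ≤ k) (hk : k ≤ p-1) :
    ((stirl (p-1) k : ℕ) : ZMod p) = (((p-1-k)! : ℕ) : ZMod p) := by
  have h := fact_mul_stirl (p-1) k
  have h' : ((k ! : ℕ) : ZMod p) * ((stirl (p-1) k : ℕ) : ZMod p)
      = ∑ j ∈ Finset.range (k+1),
          (-1:ZMod p)^j * ((k.choose j : ℕ) : ZMod p) * (((k-j : ℕ) : ℕ) : ZMod p)^(p-1) := by
    have h2 := congrArg (Int.cast : ℤ → ZMod p) h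
    push_cast at h2
    convert h2 using 2
  have hterm : ∀ j ∈ Finset.range k,
      (-1:ZMod p)^j * ((k.choose j : ℕ) : ZMod p) * (((k-j : ℕ) : ℕ) : ZMod p)^(p-1)
      = (-1:ZMod p)^j * ((k.choose j : ℕ) : ZMod p) := by
    intro j hj
    have hj' : j < k := Finset.mem_range.mp hj
    have hne : (((k-j:ℕ) : ℕ) : ZMod p) ≠ 0 := by
      rw [Ne, ZMod.natCast_eq_zero_iff]
      intro hdvd
      have := Nat.le_of_dvd (by omega) hdvd
      omega
    rw [ZMod.pow_card_sub_one_eq_one hne, mul_one]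
  have halt : ∑ j ∈ Finset.range (k+1), (-1:ZMod p)^j * ((k.choose j : ℕ) : ZMod p) = 0 := by
    have h3' := Int.alternating_sum_range_choose_of_ne (show k ≠ 0 by omega)
    have h4 := congrArg (Int.cast : ℤ → ZMod p) h3'
    push_cast at h4
    convert h4 using 2
  have hrhs : ((k ! : ℕ) : ZMod p) * ((stirl (p-1) k : ℕ) : ZMod p) = (-1)^(k+1) := by
    rw [h', Finset.sum_range_succ, Finset.sum_congr rfl hterm]
    have hlast : (((k-k : ℕ) : ℕ) : ZMod p)^(p-1) = 0 := by
      rw [Nat.sub_self, Nat.cast_zero]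
      exact zero_pow (show p - 1 ≠ 0 by omega)
    rw [hlast, mul_zero, add_zero]
    have h5 := halt
    rw [Finset.sum_range_succ] at h5
    simp only [Nat.choose_self, Nat.cast_one, mul_one] at h5
    rw [pow_succ]
    linear_combination h5
  have hne : ((k ! : ℕ) : ZMod p) ≠ 0 := by
    rw [Ne, ZMod.natCast_eq_zero_iff]
    rw [hp.dvd_factorial]
    omega
  apply mul_left_cancel₀ hne
  rw [hrhs, fact_mul_fact p hp k hk]
end ModP

/-- For every prime p ≥ 3, p divides (K_p - Bell(p-1)) + 1, where
    K_p = Σ_{n=0}^{p-1} n!; hence the Gertsch quotient is an integer. -/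
theorem gertsch_quotient_integer (p : ℕ) (hp : p.Prime) (h3 : 3 ≤ p) :
    (p : ℤ) ∣ ((∑ n ∈ Finset.range p, n ! : ℕ) : ℤ) - (bell (p - 1) : ℤ) + 1 := by
  haveI : Fact p.Prime := ⟨hp⟩
  have hp1 : p - 1 + 1 = p := by omega
  have hstirl0 : stirl (p-1) 0 = 0 := by
    have h2 : p - 1 = (p-2) + 1 := by omega
    rw [h2]; exact stirl_succ_zero _
  have hbell : ((bell (p-1) : ℕ) : ZMod p)
      = ∑ i ∈ Finset.range (p-1), ((stirl (p-1) (i+1) : ℕ) : ZMod p) := by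
    rw [bell_eq]
    push_cast
    rw [Finset.sum_range_succ' (fun k => ((stirl (p-1) k : ℕ) : ZMod p)) (p-1)]
    simp [hstirl0]
  have hbell2 : ((bell (p-1) : ℕ) : ZMod p)
      = ∑ m ∈ Finset.range (p-1), ((m ! : ℕ) : ZMod p) := by
    rw [hbell]
    have hcong : ∀ i ∈ Finset.range (p-1),
        ((stirl (p-1) (i+1) : ℕ) : ZMod p) = (((p-1-1-i)! : ℕ) : ZMod p) := by
      intro i hi
      have hi' : i < p - 1 := Finset.mem_range.mp hi
      rw [stirl_mod p hp h3 (i+1) (by omega) (by omega)]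
      congr 2
      omega
    rw [Finset.sum_congr rfl hcong,
      Finset.sum_range_reflect (fun m => ((m ! : ℕ) : ZMod p)) (p-1)]
  have hK : (∑ n ∈ Finset.range p, ((n ! : ℕ) : ZMod p))
      = ∑ m ∈ Finset.range (p-1), ((m ! : ℕ) : ZMod p) + (((p-1)! : ℕ) : ZMod p) := by
    rw [← Finset.sum_range_succ (fun n => ((n ! : ℕ) : ZMod p)) (p-1), hp1]
  apply (ZMod.intCast_zmod_eq_zero_iff_dvd _ p).mp
  push_cast
  rw [hK, ← hbell2, ZMod.wilsons_lemma]
  ring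
end
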